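/- arXiv:1401.6473 — 6 statements merged into one kernel-verified Lean document; each statement's English description precedes it below -/
import Mathlib

section
/- Let N ≥ 2 and let t_1⋯t_p ∈ {0,...,N-1}^p be an admissible block. Then the periodic sequence (t_1⋯t_p)^∞ is shift-maximal, i.e., for every 1 ≤ i ≤ p, the cyclically shifted sequence t_i⋯t_p(t_1⋯t_p)^∞ is lexicographically ≤ (t_1⋯t_p)^∞. -/
/-- Reflection of a block: each digit `c` becomes `N - 1 - c`. -/
def reflB (N : ℕ) (w : List ℕ) : List ℕ := w.map (fun c => N - 1 - c)

/-- The block `w` with its last digit incremented by one. -/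
def plusB (w : List ℕ) : List ℕ := w.dropLast ++ [w.getLast! + 1]

/-- The `i`-th cyclic rotation of the block `w` (0-indexed). -/
def rotB (w : List ℕ) (i : ℕ) : List ℕ := w.drop i ++ w.take i

/-- The lexicographic inequalities defining admissibility of a block. -/
def AdmissibleIneq (N : ℕ) (w : List ℕ) : Prop :=
  ∀ i < w.length,
    reflB N w ≤ rotB w i ∧ plusB (w.drop i) ++ reflB N (w.take i) ≤ plusB w

/-- An admissible block in `{0, …, N-1}`. -/
def Admissible (N : ℕ) (w : List ℕ) : Prop :=
  w ≠ [] ∧ (∀ c ∈ w, c < N) ∧ w.getLast! < N - 1 ∧ AdmissibleIneq N w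

/-- Prefixes of the generalized Thue–Morse sequence generated by `plusB w`:
`gtmBlock N w n` is the prefix `θ_1 ⋯ θ_{2^n p}`. -/
def gtmBlock (N : ℕ) (w : List ℕ) : ℕ → List ℕ
  | 0 => plusB w
  | n + 1 => gtmBlock N w n ++ plusB (reflB N (gtmBlock N w n))

/-- The generalized Thue–Morse sequence generated by `plusB w`, 0-indexed:
`gtm N w n = θ_{n+1}`. -/
def gtm (N : ℕ) (w : List ℕ) : ℕ → ℕ := fun n => (gtmBlock N w n).getD n 0

/-- Strict lexicographic order on infinite sequences of digits. -/
def seqLt (a b : ℕ → ℕ) : Prop := ∃ n, (∀ k < n, a k = b k) ∧ a n < b n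

/-- Lexicographic order on infinite sequences of digits. -/
def seqLe (a b : ℕ → ℕ) : Prop := seqLt a b ∨ a = b

/-- Shift of a sequence by `k` places. -/
def shift (a : ℕ → ℕ) (k : ℕ) : ℕ → ℕ := fun n => a (n + k)

/-- The periodic sequence `w^∞` obtained by repeating the block `w`. -/
def per (w : List ℕ) : ℕ → ℕ := fun n => w.getD (n % w.length) 0

/-- Reflection of an infinite sequence. -/
def reflSeq (N : ℕ) (a : ℕ → ℕ) : ℕ → ℕ := fun n => N - 1 - a n

/-- The classical Thue–Morse sequence: parity of the binary digit sum. -/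
def tm (i : ℕ) : ℕ := (Nat.digits 2 i).sum % 2

/-- Number of length-`n` words appearing in sequences of `Z`. -/
noncomputable def wordCount (Z : Set (ℕ → ℕ)) (n : ℕ) : ℕ :=
  Set.ncard { u : List ℕ | u.length = n ∧ ∃ d ∈ Z, ∀ k < n, u.getD k 0 = d k }

/-- `Z` has topological entropy `h`. -/
def hasEntropy (Z : Set (ℕ → ℕ)) (h : ℝ) : Prop :=
  Filter.Tendsto (fun n : ℕ => Real.log (wordCount Z n) / n) Filter.atTop (nhds h)

/-! For a nontrivial shift (`i ≥ 2`) the second admissibility inequality, cut down to its first `p - i + 1` digits,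
says `(t_i⋯t_p)^+ ≤ t_1⋯t_{p-i+1}`. Since `t_i⋯t_p < (t_i⋯t_p)^+`, the shifted sequence is
already strictly smaller than `(t_1⋯t_p)^∞` on its first `p - i + 1` digits. -/

theorem List.Lex.append_of_length_eq {α : Type*} {r : α → α → Prop} {a c : List α}
    (h : List.Lex r a c) (hlen : a.length = c.length) (b d : List α) :
    List.Lex r (a ++ b) (c ++ d) := by
  induction h with
  | nil => simp at hlen
  | cons _ ih => exact .cons (ih (by simpa using hlen))
  | rel hxy => exact .rel hxy

theorem List.le_of_append_le_append {α : Type*} [LinearOrder α] {a b c d : List α}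
    (hlen : a.length = c.length) (h : a ++ b ≤ c ++ d) : a ≤ c := by
  rw [← not_lt] at h ⊢
  exact fun hlt => h (List.Lex.append_of_length_eq hlt hlen.symm d b)

lemma length_plusB {u : List ℕ} (hu : u ≠ []) : (plusB u).length = u.length := by
  have := List.length_pos_iff.mpr hu
  simp only [plusB, List.length_append, List.length_dropLast, List.length_singleton]
  omega

lemma take_plusB {u : List ℕ} {k : ℕ} (hk : k < u.length) : (plusB u).take k = u.take k := by
  rw [plusB, List.take_append_of_le_length (by simp; omega), List.dropLast_eq_take,
    List.take_take, min_eq_left (by omega)]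

lemma lt_plusB {u : List ℕ} (hu : u ≠ []) : u < plusB u := by
  conv_lhs => rw [← List.dropLast_append_getLast hu]
  rw [plusB, List.getLast!_of_getLast? (List.getLast?_eq_some_getLast hu)]
  exact List.append_left_lt (List.cons_lt_cons_iff.mpr (.inl (Nat.lt_succ_self _)))

lemma per_append_of_lt {u v : List ℕ} {n : ℕ} (hn : n < u.length) :
    per (u ++ v) n = u[n] := by
  rw [per, Nat.mod_eq_of_lt (by simp; omega), List.getD_append _ _ _ _ hn,
    List.getD_eq_getElem]

lemma seqLt_per_append {u u' v v' : List ℕ} (hlen : u.length = u'.length) (h : u < u') :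
    seqLt (per (u ++ v)) (per (u' ++ v')) := by
  obtain ⟨-, hlt⟩ | ⟨n, hn, hn', heq, hlt⟩ := List.lt_iff_exists.mp h
  · omega
  refine ⟨n, fun k hk => ?_, ?_⟩
  · rw [per_append_of_lt (by omega), per_append_of_lt (by omega), heq k hk]
  · rwa [per_append_of_lt hn, per_append_of_lt hn']

theorem stmt1_general (N : ℕ) (w : List ℕ) (hadm : Admissible N w) :
    ∀ i < w.length, seqLe (per (rotB w i)) (per w) := by
  intro i hi
  obtain ⟨-, -, -, hineq⟩ := hadm
  obtain rfl | hi0 := i.eq_zero_or_pos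
  · exact Or.inr (by simp [rotB])
  set u := w.drop i
  have hu : u ≠ [] := by simp [u]; omega
  have hlen : u.length < w.length := by simp [u]; omega
  have hplus : plusB u ≤ w.take u.length := by
    have h := (hineq i hi).2
    rw [← List.take_append_drop u.length (plusB w), take_plusB hlen] at h
    refine List.le_of_append_le_append ?_ h
    rw [length_plusB hu, List.length_take_of_le hlen.le]
  have key := seqLt_per_append (v := w.take i) (v' := w.drop u.length)
    (List.length_take_of_le hlen.le).symm ((lt_plusB hu).trans_le hplus)
  rw [List.take_append_drop] at key
  exact Or.inl key

/-- if `t_1⋯t_p` is admissible then `(t_1⋯t_p)^∞` is shift-maximal: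
every cyclic shift `t_i⋯t_p(t_1⋯t_p)^∞ = (t_i⋯t_p t_1⋯t_{i-1})^∞` is `≤ (t_1⋯t_p)^∞`. -/
theorem stmt1 (N : ℕ) (hN : 2 ≤ N) (w : List ℕ) (hadm : Admissible N w) :
    ∀ i < w.length, seqLe (per (rotB w i)) (per w) :=
  stmt1_general N w hadm
end

section
/- Let N ≥ 2, let t_1⋯t_p be an admissible block, and let (θ_i) be the generalized Thue–Morse sequence generated by t_1⋯t_p^+. Then for every n ≥ 0 and every 1 ≤ i ≤ 2^n p, the block θ_i⋯θ_{2^n p} satisfies the strict lower bound (reflection of θ_1⋯θ_{2^n p - i + 1}) < θ_i⋯θ_{2^n p} and the upper bound θ_i⋯θ_{2^n p} ≤ θ_1⋯θ_{2^n p - i + 1} in lexicographic order. -/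
/-!
Call a word `l` suffix-bounded if every nonempty suffix `s` of `l` satisfies `p̄ < s ≤ p`, where
`p` is the prefix of `l` of length `|s|`. For `l = t⁺` this is the admissibility of `t`, together
with `t < t⁺` and the fact that reflection reverses the lexicographic order on words of equal
length. Suffix-boundedness passes from `l` to `l (l̄)⁺`, which gives the theorem by induction.
A suffix `s (l̄)⁺` starting in the first half is compared with the prefix `p` of `l`; on a tie
`s = p`, the word `(l̄)⁺` begins with the reflection of a prefix of `l`, which the bound at the
complementary position puts strictly below the matching suffix of `l`. A suffix `(s̄)⁺` in the
second half lies above `p̄` because `p̄ ≤ s̄ < (s̄)⁺`, and below `p` because `s̄ < p` and `(s̄)⁺` is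
the lexicographic successor of `s̄` among words of its length.
-/

namespace List

variable {α : Type*} [LinearOrder α] {x y u v : List α}

theorem append_lt_append_iff_of_length_eq (h : x.length = y.length) :
    x ++ u < y ++ v ↔ x < y ∨ x = y ∧ u < v := by
  induction x generalizing y with
  | nil => cases y with
    | nil => simp
    | cons => simp at h
  | cons a x ih => cases y with
    | nil => simp at h
    | cons b y =>
      simp only [cons_append, cons_lt_cons_iff, ih (by simpa using h), cons.injEq]
      tauto

theorem append_le_append_iff_of_length_eq (h : x.length = y.length) :
    x ++ u ≤ y ++ v ↔ x < y ∨ x = y ∧ u ≤ v := by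
  rw [← not_lt, append_lt_append_iff_of_length_eq h.symm, ← not_lt]
  rcases lt_trichotomy x y with hxy | rfl | hxy
  · simp [hxy, hxy.ne, hxy.ne', not_lt_of_gt hxy]
  · simp
  · simp [hxy, hxy.ne, hxy.ne', not_lt_of_gt hxy]

theorem le_take_of_append_le (h : x ++ u ≤ y) (hxy : x.length ≤ y.length) :
    x ≤ y.take x.length := by
  rw [← take_append_drop x.length y, append_le_append_iff_of_length_eq (by simpa)] at h
  rcases h with h | ⟨h, -⟩
  · exact h.le
  · exact h.le

theorem take_le_of_le_append (h : y ≤ x ++ u) (hxy : x.length ≤ y.length) :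
    y.take x.length ≤ x := by
  rw [← take_append_drop x.length y, append_le_append_iff_of_length_eq (by simpa)] at h
  rcases h with h | ⟨h, -⟩
  · exact h.le
  · exact h.le

theorem take_le_take_of_lt (h : x < y) (k : ℕ) : x.take k ≤ y.take k := by
  induction k generalizing x y with
  | zero => simp
  | succ k ih =>
    match x, y, h with
    | [], _ :: _, _ => exact (nil_lt_cons _ _).le
    | _ :: _, _ :: _, .rel h => exact (cons_lt_cons_iff.2 (Or.inl h)).le
    | a :: _, _ :: _, .cons h => exact cons_le_cons a (ih h)

end List

open List

theorem plusB_concat (x : List ℕ) (a : ℕ) : plusB (x ++ [a]) = x ++ [a + 1] := by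
  simp [plusB]

theorem getLast!_plusB (x : List ℕ) : (plusB x).getLast! = x.getLast! + 1 := by
  simp [plusB]

theorem plusB_append (x : List ℕ) {y : List ℕ} (hy : y ≠ []) :
    plusB (x ++ y) = x ++ plusB y := by
  obtain ⟨y, b, rfl⟩ := (eq_nil_or_concat' y).resolve_left hy
  rw [← append_assoc, plusB_concat, plusB_concat, append_assoc]

theorem length_plusB_s2 {w : List ℕ} (hw : w ≠ []) : (plusB w).length = w.length := by
  obtain ⟨w, b, rfl⟩ := (eq_nil_or_concat' w).resolve_left hw
  simp [plusB_concat]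

theorem plusB_eq_take_append {w : List ℕ} {j : ℕ} (hj : j < w.length) :
    plusB w = w.take j ++ plusB (w.drop j) := by
  conv_lhs => rw [← take_append_drop j w]
  exact plusB_append _ (by simpa using hj)

theorem drop_plusB {w : List ℕ} {j : ℕ} (hj : j < w.length) :
    (plusB w).drop j = plusB (w.drop j) := by
  rw [plusB_eq_take_append hj, drop_left' (length_take_of_le hj.le)]

theorem take_plusB_s2 {w : List ℕ} {j : ℕ} (hj : j < w.length) :
    (plusB w).take j = w.take j := by
  rw [plusB_eq_take_append hj, take_left' (length_take_of_le hj.le)]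

theorem lt_plusB_s2 {w : List ℕ} (hw : w ≠ []) : w < plusB w := by
  obtain ⟨w, b, rfl⟩ := (eq_nil_or_concat' w).resolve_left hw
  rw [plusB_concat, append_lt_append_iff_of_length_eq rfl]
  simp [cons_lt_cons_iff]

theorem plusB_le_of_lt {x y : List ℕ} (hx : x ≠ []) (hxy : x.length = y.length) (h : x < y) :
    plusB x ≤ y := by
  obtain ⟨x, a, rfl⟩ := (eq_nil_or_concat' x).resolve_left hx
  obtain ⟨y, b, rfl⟩ := (eq_nil_or_concat' y).resolve_left (by rintro rfl; simp at hxy)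
  have hlen : x.length = y.length := by simpa using hxy
  rw [append_lt_append_iff_of_length_eq hlen] at h
  rw [plusB_concat, append_le_append_iff_of_length_eq hlen]
  rcases h with h | ⟨rfl, h⟩
  · exact Or.inl h
  · simp only [cons_lt_cons_iff, not_lt_nil, and_false, or_false] at h
    simp only [lt_self_iff_false, le_iff_lt_or_eq, cons_lt_cons_iff, and_false, or_false,
      cons.injEq, and_true, true_and, false_or]
    omega

theorem plusB_digits_lt {N : ℕ} {w : List ℕ} (hw : ∀ c ∈ w, c < N) (hlast : w.getLast! < N - 1) :
    ∀ c ∈ plusB w, c < N := by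
  intro c hc
  rcases mem_append.1 hc with hc | hc
  · exact hw c (dropLast_subset w hc)
  · rw [mem_singleton.1 hc]; omega

section Reflection

variable {N : ℕ}

@[simp] theorem length_reflB (w : List ℕ) : (reflB N w).length = w.length := by
  simp [reflB]

@[simp] theorem reflB_eq_nil_iff {w : List ℕ} : reflB N w = [] ↔ w = [] := by
  simp [reflB]

theorem length_plusB_reflB {w : List ℕ} (hw : w ≠ []) : (plusB (reflB N w)).length = w.length := by
  rw [length_plusB_s2 (by simpa using hw), length_reflB]

theorem reflB_append (x y : List ℕ) : reflB N (x ++ y) = reflB N x ++ reflB N y := by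
  simp [reflB]

theorem reflB_take (w : List ℕ) (k : ℕ) : reflB N (w.take k) = (reflB N w).take k := by
  simp [reflB, map_take]

theorem reflB_drop (w : List ℕ) (k : ℕ) : reflB N (w.drop k) = (reflB N w).drop k := by
  simp [reflB, map_drop]

theorem reflB_reflB {w : List ℕ} (hw : ∀ c ∈ w, c < N) : reflB N (reflB N w) = w := by
  rw [reflB, reflB, map_map]
  refine (map_congr_left fun c hc => ?_).trans (map_id w)
  have := hw c hc
  simp only [Function.comp_apply, id_eq]
  omega

theorem reflB_lt_reflB {x y : List ℕ} (hxy : x.length = y.length) (hy : ∀ c ∈ y, c < N)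
    (h : x < y) : reflB N y < reflB N x := by
  induction x generalizing y with
  | nil => cases y with
    | nil => exact absurd h (lt_irrefl _)
    | cons => simp at hxy
  | cons a x ih => cases y with
    | nil => simp at hxy
    | cons b y =>
      simp only [reflB, map_cons, cons_lt_cons_iff] at h ⊢
      have hb := hy b mem_cons_self
      rcases h with h | ⟨rfl, h⟩
      · left; omega
      · exact Or.inr ⟨rfl, ih (by simpa using hxy) (fun c hc => hy c (mem_cons_of_mem _ hc)) h⟩

theorem reflB_le_reflB {x y : List ℕ} (hxy : x.length = y.length) (hy : ∀ c ∈ y, c < N)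
    (h : x ≤ y) : reflB N y ≤ reflB N x := by
  rcases h.lt_or_eq with h | rfl
  · exact (reflB_lt_reflB hxy hy h).le
  · exact le_rfl

theorem getLast!_reflB {w : List ℕ} (hw : w ≠ []) :
    (reflB N w).getLast! = N - 1 - w.getLast! := by
  obtain ⟨w, b, rfl⟩ := (eq_nil_or_concat' w).resolve_left hw
  simp [reflB]

end Reflection

theorem getLast!_gtmBlock_pos (N : ℕ) (w : List ℕ) (n : ℕ) : 0 < (gtmBlock N w n).getLast! := by
  cases n with
  | zero => rw [gtmBlock, getLast!_plusB]; omega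
  | succ n => simp [gtmBlock, plusB]

theorem gtmBlock_ne_nil (N : ℕ) (w : List ℕ) (n : ℕ) : gtmBlock N w n ≠ [] := by
  cases n <;> simp [gtmBlock, plusB]

theorem gtmBlock_digits_lt {N : ℕ} {w : List ℕ} (hw : ∀ c ∈ w, c < N) (hlast : w.getLast! < N - 1)
    (n : ℕ) : ∀ c ∈ gtmBlock N w n, c < N := by
  induction n with
  | zero => exact plusB_digits_lt hw hlast
  | succ n ih =>
    have hrefl : ∀ c ∈ reflB N (gtmBlock N w n), c < N := by
      simp only [reflB, mem_map]
      rintro _ ⟨c, -, rfl⟩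
      omega
    have hrefl_last : (reflB N (gtmBlock N w n)).getLast! < N - 1 := by
      rw [getLast!_reflB (gtmBlock_ne_nil N w n)]
      have := getLast!_gtmBlock_pos N w n
      omega
    intro c hc
    rcases mem_append.1 hc with hc | hc
    · exact ih c hc
    · exact plusB_digits_lt hrefl hrefl_last c hc

def SuffixBoundedAt (N : ℕ) (l : List ℕ) (j : ℕ) : Prop :=
  reflB N (l.take (l.length - j)) < l.drop j ∧ l.drop j ≤ l.take (l.length - j)

def SuffixBounded (N : ℕ) (l : List ℕ) : Prop :=
  ∀ j < l.length, SuffixBoundedAt N l j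

theorem suffixBounded_plusB {N : ℕ} {w : List ℕ} (hadm : Admissible N w) :
    SuffixBounded N (plusB w) := by
  obtain ⟨hne, hdig, hlast, hineq⟩ := hadm
  intro j hj
  rw [length_plusB_s2 hne] at hj
  obtain ⟨hrefl_le_rot, hplus_le⟩ := hineq j hj
  have hlen : (w.drop j).length = w.length - j := length_drop
  have hdrop_ne : w.drop j ≠ [] := ne_nil_of_length_pos (by omega)
  rw [SuffixBoundedAt, length_plusB_s2 hne, drop_plusB hj]
  constructor
  · calc reflB N ((plusB w).take (w.length - j))
        ≤ reflB N (w.take (w.length - j)) :=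
          reflB_le_reflB (by simp [length_plusB_s2 hne])
            (fun c hc => plusB_digits_lt hdig hlast c (take_subset _ _ hc))
            (take_le_take_of_lt (lt_plusB_s2 hne) _)
      _ = (reflB N w).take (w.drop j).length := by rw [reflB_take, hlen]
      _ ≤ w.drop j := take_le_of_le_append hrefl_le_rot (by simp)
      _ < plusB (w.drop j) := lt_plusB_s2 hdrop_ne
  · calc plusB (w.drop j) ≤ (plusB w).take (plusB (w.drop j)).length :=
          le_take_of_append_le hplus_le (by simp [length_plusB_s2 hne, length_plusB_s2 hdrop_ne])
      _ = (plusB w).take (w.length - j) := by rw [length_plusB_s2 hdrop_ne, hlen]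

section Doubling

variable {N : ℕ} {l : List ℕ} {j : ℕ}

theorem SuffixBounded.suffixBoundedAt_append_of_lt (hl : SuffixBounded N l) (hj : j < l.length) :
    SuffixBoundedAt N (l ++ plusB (reflB N l)) j := by
  set C := plusB (reflB N l)
  have hCL : C.length = l.length := length_plusB_reflB (ne_nil_of_length_pos (by omega))
  have hdrop : (l ++ C).drop j = l.drop j ++ C := drop_append_of_le_length hj.le
  have htake : (l ++ C).take ((l ++ C).length - j)
      = l.take (l.length - j) ++ (l.drop (l.length - j) ++ C.take (l.length - j)) := by
    rw [← append_assoc, take_append_drop, length_append, hCL, take_append,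
      take_of_length_le (by omega)]
    congr 2
    omega
  obtain ⟨hlow, hup⟩ := hl j hj
  have hlen : (l.take (l.length - j)).length = (l.drop j).length := by simp
  rw [SuffixBoundedAt, hdrop, htake]
  constructor
  · rw [reflB_append]
    exact (append_lt_append_iff_of_length_eq (by simp [hlen])).2 (Or.inl hlow)
  · rw [append_le_append_iff_of_length_eq hlen.symm]
    rcases hup.lt_or_eq with hup | hup
    · exact Or.inl hup
    refine Or.inr ⟨hup, ?_⟩
    rcases Nat.eq_zero_or_pos j with rfl | hj0
    · simp [take_of_length_le hCL.le]
    · have hlow' := (hl (l.length - j) (by omega)).1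
      rw [Nat.sub_sub_self hj.le, reflB_take] at hlow'
      have hCj : C.take j = (reflB N l).take j := take_plusB_s2 (by simpa using hj)
      rw [← take_append_drop j C, hCj]
      have hlen' : ((reflB N l).take j).length = (l.drop (l.length - j)).length := by
        simp only [length_take, length_reflB, length_drop]
        omega
      exact ((append_lt_append_iff_of_length_eq hlen').2 (Or.inl hlow')).le

theorem SuffixBounded.suffixBoundedAt_append_length_add (hdig : ∀ c ∈ l, c < N)
    (hl : SuffixBounded N l) {k : ℕ} (hk : k < l.length) :
    SuffixBoundedAt N (l ++ plusB (reflB N l)) (l.length + k) := by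
  have hrefl_drop_ne : reflB N (l.drop k) ≠ [] := by
    simpa using ne_nil_of_length_pos (by rw [length_drop]; omega : 0 < (l.drop k).length)
  have hCL := length_plusB_reflB (N := N) (ne_nil_of_length_pos (by omega : 0 < l.length))
  have hdrop : (l ++ plusB (reflB N l)).drop (l.length + k) = plusB (reflB N (l.drop k)) := by
    rw [← drop_drop, drop_left, drop_plusB (by simpa using hk), reflB_drop]
  have htake : (l ++ plusB (reflB N l)).take ((l ++ plusB (reflB N l)).length - (l.length + k))
      = l.take (l.length - k) := by
    rw [length_append, hCL, take_append_of_le_length (by omega)]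
    congr 1
    omega
  obtain ⟨hlow, hup⟩ := hl k hk
  have hlen : (l.drop k).length = (l.take (l.length - k)).length := by simp
  have htake_dig : ∀ c ∈ l.take (l.length - k), c < N := fun c hc => hdig c (take_subset _ _ hc)
  rw [SuffixBoundedAt, hdrop, htake]
  constructor
  · exact (reflB_le_reflB hlen htake_dig hup).trans_lt (lt_plusB_s2 hrefl_drop_ne)
  · refine plusB_le_of_lt hrefl_drop_ne (by simp [hlen]) ?_
    have := reflB_lt_reflB (by simp [hlen]) (fun c hc => hdig c (drop_subset _ _ hc)) hlow
    rwa [reflB_reflB htake_dig] at this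

theorem SuffixBounded.append_plusB_reflB (hne : l ≠ []) (hdig : ∀ c ∈ l, c < N)
    (hl : SuffixBounded N l) : SuffixBounded N (l ++ plusB (reflB N l)) := by
  intro j hj
  rw [length_append, length_plusB_reflB hne] at hj
  rcases lt_or_ge j l.length with hjL | hLj
  · exact hl.suffixBoundedAt_append_of_lt hjL
  · obtain ⟨k, rfl⟩ := Nat.exists_eq_add_of_le hLj
    exact hl.suffixBoundedAt_append_length_add hdig (by omega)

end Doubling

theorem stmt2_general (N : ℕ) (w : List ℕ) (hadm : Admissible N w) :
    ∀ n : ℕ, ∀ j < (gtmBlock N w n).length,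
      reflB N ((gtmBlock N w n).take ((gtmBlock N w n).length - j)) <
        (gtmBlock N w n).drop j ∧
      (gtmBlock N w n).drop j ≤ (gtmBlock N w n).take ((gtmBlock N w n).length - j) := by
  intro n
  induction n with
  | zero => exact suffixBounded_plusB hadm
  | succ n ih =>
    obtain ⟨-, hdig, hlast, -⟩ := hadm
    exact SuffixBounded.append_plusB_reflB (gtmBlock_ne_nil N w n)
      (gtmBlock_digits_lt hdig hlast n) ih

/-- Lemma 4.1 — bounds on the suffixes of the prefixes
`θ_1⋯θ_{2^n p}` of the generalized Thue–Morse sequence. -/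
theorem stmt2 (N : ℕ) (hN : 2 ≤ N) (w : List ℕ) (hadm : Admissible N w) :
    ∀ n : ℕ, ∀ j < (gtmBlock N w n).length,
      reflB N ((gtmBlock N w n).take ((gtmBlock N w n).length - j)) <
        (gtmBlock N w n).drop j ∧
      (gtmBlock N w n).drop j ≤ (gtmBlock N w n).take ((gtmBlock N w n).length - j) :=
  stmt2_general N w hadm
end

section
/- Let N ≥ 2 and let s_1⋯s_q and t_1⋯t_p be admissible blocks with 1 ≤ q < p. If (s_1⋯s_q)^∞ > (t_1⋯t_p)^∞ lexicographically, then the generalized Thue–Morse sequence generated by s_1⋯s_q^+ is lexicographically ≥ the generalized Thue–Morse sequence generated by t_1⋯t_p^+. -/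
/-
Since `q < p`, the first `q` digits of GTM(`t^+`) are `t_1 ⋯ t_q`, untouched by the increment
of `t_p`, while GTM(`s^+`) starts with `s_1 ⋯ s_{q-1} (s_q + 1)`. From `t^∞ < s^∞` we get
`t_1 ⋯ t_q ≤ s_1 ⋯ s_q < s_1 ⋯ s_q^+`, so the two sequences already differ within `q` digits.
-/

lemma length_le_gtmBlock (N : ℕ) (w : List ℕ) (n : ℕ) : w.length ≤ (gtmBlock N w n).length := by
  induction n with
  | zero => simp only [gtmBlock, plusB, List.length_append, List.length_dropLast, List.length_singleton]; omega
  | succ n ih => simp only [gtmBlock, List.length_append]; omega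

lemma gtmBlock_getD_of_lt_length (N : ℕ) (w : List ℕ) (n : ℕ) {k : ℕ} (hk : k < w.length) :
    (gtmBlock N w n).getD k 0 = (plusB w).getD k 0 := by
  induction n with
  | zero => rfl
  | succ n ih =>
    rw [gtmBlock, List.getD_append _ _ _ _ (hk.trans_le (length_le_gtmBlock N w n)), ih]

lemma gtm_of_lt_length (N : ℕ) (w : List ℕ) {k : ℕ} (hk : k < w.length) :
    gtm N w k = (plusB w).getD k 0 :=
  gtmBlock_getD_of_lt_length N w k hk

lemma plusB_getD_of_succ_lt_length (w : List ℕ) {k : ℕ} (hk : k + 1 < w.length) :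
    (plusB w).getD k 0 = w.getD k 0 := by
  rw [plusB, List.getD_append _ _ _ _ (by simp; omega), List.getD_eq_getElem _ _ (by simp; omega),
    List.getD_eq_getElem _ _ (by omega), List.getElem_dropLast]

lemma plusB_getD_length_sub_one (w : List ℕ) (hw : w ≠ []) :
    (plusB w).getD (w.length - 1) 0 = w.getD (w.length - 1) 0 + 1 := by
  have hpos := List.length_pos_iff.mpr hw
  rw [plusB, ← List.length_dropLast, List.getD_append_right _ _ _ _ le_rfl, Nat.sub_self,
    List.getD_cons_zero, List.length_dropLast, List.getD_eq_getElem _ _ (by omega),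
    List.getLast!_eq_getElem!, getElem!_pos w _ (by omega)]

lemma per_of_lt_length (w : List ℕ) {k : ℕ} (hk : k < w.length) : per w k = w.getD k 0 := by
  rw [per, Nat.mod_eq_of_lt hk]

lemma ne_nil_of_seqLt_per {a : ℕ → ℕ} {w : List ℕ} (h : seqLt a (per w)) : w ≠ [] := by
  rintro rfl
  obtain ⟨n, -, hn⟩ := h
  simp [per] at hn

lemma seqLt_of_eqOn_of_lt {a b a' b' : ℕ → ℕ} (r : ℕ) (h : seqLt a b)
    (ha : ∀ k ≤ r, a' k = a k) (hb : ∀ k < r, b' k = b k) (hr : b r < b' r) :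
    seqLt a' b' := by
  obtain ⟨n, hpre, hn⟩ := h
  rcases lt_or_ge n r with hnr | hrn
  · exact ⟨n, fun k hk => by rw [ha k (by omega), hb k (by omega), hpre k hk],
      by rw [ha n hnr.le, hb n hnr]; exact hn⟩
  · refine ⟨r, fun k hk => by rw [ha k hk.le, hb k hk, hpre k (by omega)], ?_⟩
    rw [ha r le_rfl]
    rcases hrn.lt_or_eq with hrn | rfl
    · rw [hpre r hrn]; exact hr
    · exact hn.trans hr

theorem stmt9_general (N : ℕ) (s t : List ℕ)
    (hlen : s.length < t.length)
    (h : seqLt (per t) (per s)) :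
    seqLe (gtm N t) (gtm N s) := by
  have hs : s ≠ [] := ne_nil_of_seqLt_per h
  have hq := List.length_pos_iff.mpr hs
  refine Or.inl (seqLt_of_eqOn_of_lt (s.length - 1) h (fun k hk => ?_) (fun k hk => ?_) ?_)
  · rw [gtm_of_lt_length N t (by omega), plusB_getD_of_succ_lt_length t (by omega),
      per_of_lt_length t (by omega)]
  · rw [gtm_of_lt_length N s (by omega), plusB_getD_of_succ_lt_length s (by omega),
      per_of_lt_length s (by omega)]
  · rw [gtm_of_lt_length N s (by omega), plusB_getD_length_sub_one s hs,
      per_of_lt_length s (by omega)]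
    exact Nat.lt_succ_self _

/-- Lemma 5.7 — for admissible blocks `s` (length `q`) and
`t` (length `p`) with `q < p`, if `s^∞ > t^∞` then GTM(`s^+`) `≥` GTM(`t^+`). -/
theorem stmt9 (N : ℕ) (hN : 2 ≤ N) (s t : List ℕ)
    (hs : Admissible N s) (ht : Admissible N t) (hlen : s.length < t.length)
    (h : seqLt (per t) (per s)) :
    seqLe (gtm N t) (gtm N s) :=
  stmt9_general N s t hlen h
end

section
/- Let N ≥ 2 and let t_1⋯t_p be an admissible block. Define Z = {(d_i) ∈ {0,...,N-1}^∞ : for all n ≥ 1, (reflection of t_1⋯t_p) ≤ d_n⋯d_{n+p-1} ≤ t_1⋯t_p}. Suppose (d_i) ∈ {0,...,N-1}^∞ satisfies, for all n ≥ 1, the lexicographic strict inequalities (reflection of t_1⋯t_p^+ followed by t_1⋯t_p^+)^∞ < d_n d_{n+1}⋯ < (t_1⋯t_p^+ followed by reflection of t_1⋯t_p^+)^∞. Then (d_i) ∈ Z, i.e., every length-p window of (d_i) lies strictly between reflection of t_1⋯t_p^+ and t_1⋯t_p^+, hence between reflection of t_1⋯t_p and t_1⋯t_p. -/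

private lemma myGetLast! (w : List ℕ) (h : w ≠ []) : w.getLast! = w.getD (w.length - 1) 0 := by
  have hl : w.length - 1 < w.length := by
    have := List.length_pos_iff.mpr h; omega
  rw [List.getD_eq_getElem _ _ hl, List.getLast!_eq_getElem!, getElem!_pos w (w.length - 1) hl]

private lemma lex_of_agree (a b : List ℕ) (m : ℕ) (hma : m < a.length) (hmb : m < b.length)
    (hag : ∀ j < m, a.getD j 0 = b.getD j 0) (hlt : a.getD m 0 < b.getD m 0) : a < b := by
  induction m generalizing a b with
  | zero =>
    cases a with
    | nil => simp at hma
    | cons x xs =>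
      cases b with
      | nil => simp at hmb
      | cons y ys => exact List.Lex.rel (by simpa using hlt)
  | succ m ih =>
    cases a with
    | nil => simp at hma
    | cons x xs =>
      cases b with
      | nil => simp at hmb
      | cons y ys =>
        have hxy : x = y := by simpa using hag 0 (Nat.succ_pos m)
        subst hxy
        exact List.Lex.cons (ih xs ys (by simpa using hma) (by simpa using hmb)
          (fun j hj => by simpa using hag (j+1) (by omega)) (by simpa using hlt))

private lemma eq_of_agree (a b : List ℕ) (hlen : a.length = b.length)
    (hag : ∀ j < b.length, a.getD j 0 = b.getD j 0) : a = b := by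
  apply List.ext_getElem hlen
  intro j h1 h2
  have := hag j h2
  rwa [List.getD_eq_getElem _ _ h1, List.getD_eq_getElem _ _ h2] at this

private lemma per_append_add (A B : List ℕ) (hlen : B.length = A.length) (hA : 0 < A.length)
    (i : ℕ) : per (A ++ B) (i + A.length) = per (B ++ A) i := by
  set a := A.length with ha
  unfold per
  have hlAB : (A ++ B).length = a + a := by simp [hlen]; rfl
  have hlBA : (B ++ A).length = a + a := by simp [hlen]; rfl
  rw [hlAB, hlBA]
  set j := i % (a + a) with hj
  have hjlt : j < a + a := Nat.mod_lt _ (by omega)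
  have hmod : (i + a) % (a + a) = (j + a) % (a + a) := by
    conv_lhs => rw [Nat.add_mod, ← hj]
    rw [Nat.mod_eq_of_lt (show a < a + a by omega)]
  rw [hmod]
  rcases lt_or_ge j a with h | h
  · rw [Nat.mod_eq_of_lt (by omega)]
    rw [List.getD_append_right _ _ _ _ (by omega), List.getD_append _ _ _ _ (by omega)]
    congr 1
    omega
  · have : (j + a) % (a + a) = j - a := by
      rw [Nat.mod_eq_sub_mod (by omega), Nat.mod_eq_of_lt (by omega)]
      omega
    rw [this]
    rw [List.getD_append _ _ _ _ (by omega), List.getD_append_right _ _ _ _ (by omega)]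
    congr 1
    omega
/-- Lemma 6.2 — if every tail of `d` lies strictly between
`(reflection(t_1⋯t_p^+) t_1⋯t_p^+)^∞` and `(t_1⋯t_p^+ reflection(t_1⋯t_p^+))^∞`,
then every length-`p` window of `d` lies between `reflection(t_1⋯t_p)` and
`t_1⋯t_p`, i.e. `d ∈ Z_{t_1⋯t_p}`. -/
theorem stmt13 (N : ℕ) (hN : 2 ≤ N) (w : List ℕ) (hadm : Admissible N w)
    (d : ℕ → ℕ) (hd : ∀ n, d n < N)
    (hbound : ∀ k : ℕ,
      seqLt (per (reflB N (plusB w) ++ plusB w)) (shift d k) ∧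
      seqLt (shift d k) (per (plusB w ++ reflB N (plusB w)))) :
    ∀ n : ℕ,
      reflB N w ≤ (List.range w.length).map (fun j => d (n + j)) ∧
      (List.range w.length).map (fun j => d (n + j)) ≤ w := by
  obtain ⟨hne, hdig, hlast, hineq⟩ := hadm
  set p := w.length with hp'
  have hp : 0 < p := List.length_pos_iff.mpr hne
  set v := plusB w with hv
  set rv := reflB N v with hrvdef
  have hvlen : v.length = p := by
    rw [hv]; unfold plusB; simp; omega
  have hrvlen : rv.length = p := by rw [hrvdef]; unfold reflB; simp [hvlen]
  have hwl : w.getD (p-1) 0 < N - 1 := by rw [← myGetLast! w hne]; exact hlast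
  have hvget : ∀ j < p - 1, v.getD j 0 = w.getD j 0 := by
    intro j hj
    rw [hv]; unfold plusB
    have h1 : j < w.dropLast.length := by rw [List.length_dropLast]; omega
    have h2 : j < w.length := by omega
    rw [List.getD_append _ _ _ _ h1, List.getD_eq_getElem _ _ h1, List.getElem_dropLast,
      List.getD_eq_getElem _ _ h2]
  have hvlast : v.getD (p-1) 0 = w.getD (p-1) 0 + 1 := by
    rw [hv]; unfold plusB
    have h1 : w.dropLast.length ≤ p - 1 := by rw [List.length_dropLast, ← hp']
    rw [List.getD_append_right _ _ _ _ h1]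
    have e : p - 1 - w.dropLast.length = 0 := by rw [List.length_dropLast, ← hp']; omega
    rw [e, myGetLast! w hne, ← hp']
    simp
  have hrvget : ∀ j < p, rv.getD j 0 = N - 1 - v.getD j 0 := by
    intro j hj
    rw [hrvdef]; unfold reflB
    have h2 : j < v.length := by omega
    have h1 : j < (List.map (fun c => N - 1 - c) v).length := by
      rw [List.length_map]; exact h2
    rw [List.getD_eq_getElem _ _ h1, List.getElem_map, List.getD_eq_getElem _ _ h2]
  have hrwlen : (reflB N w).length = p := by unfold reflB; simp; rfl
  have hrwget : ∀ j < p, (reflB N w).getD j 0 = N - 1 - w.getD j 0 := by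
    intro j hj
    unfold reflB
    have h2 : j < w.length := by omega
    have h1 : j < (List.map (fun c => N - 1 - c) w).length := by
      rw [List.length_map]; exact h2
    rw [List.getD_eq_getElem _ _ h1, List.getElem_map, List.getD_eq_getElem _ _ h2]
  have hperU : ∀ j < p, per (v ++ rv) j = v.getD j 0 := by
    intro j hj
    unfold per
    rw [show (v ++ rv).length = p + p by simp [hvlen, hrvlen],
      Nat.mod_eq_of_lt (by omega), List.getD_append _ _ _ _ (by omega)]
  have hperLo : ∀ j < p, per (rv ++ v) j = rv.getD j 0 := by
    intro j hj
    unfold per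
    rw [show (rv ++ v).length = p + p by simp [hvlen, hrvlen],
      Nat.mod_eq_of_lt (by omega), List.getD_append _ _ _ _ (by omega)]
  have hswapU : ∀ i, per (v ++ rv) (i + p) = per (rv ++ v) i := by
    intro i
    have := per_append_add v rv (hrvlen.trans hvlen.symm) (by omega) i
    rwa [hvlen] at this
  have hswapL : ∀ i, per (rv ++ v) (i + p) = per (v ++ rv) i := by
    intro i
    have := per_append_add rv v (hvlen.trans hrvlen.symm) (by omega) i
    rwa [hrvlen] at this
  have key1 : ∀ k m, p ≤ m → (∀ j < m, d (j + k) = per (v ++ rv) j) →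
      d (m + k) < per (v ++ rv) m → False := by
    intro k m hm hag hlt
    obtain ⟨m', hag', hlt'⟩ := (hbound (k + p)).1
    simp only [shift] at hag' hlt'
    have hagL : ∀ j < m - p, d (j + (k + p)) = per (rv ++ v) j := by
      intro j hj
      rw [← hswapU j, show j + (k + p) = j + p + k by ring]
      exact hag (j + p) (by omega)
    have hltL : d ((m - p) + (k + p)) < per (rv ++ v) (m - p) := by
      rw [show (m - p) + (k + p) = m + k by omega, ← hswapU (m - p),
        show m - p + p = m by omega]
      exact hlt
    rcases lt_trichotomy m' (m - p) with h | h | h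
    · rw [hagL m' h] at hlt'
      exact lt_irrefl _ hlt'
    · subst h
      omega
    · rw [hag' (m - p) h] at hltL
      exact lt_irrefl _ hltL
  have key2 : ∀ k m, p ≤ m → (∀ j < m, per (rv ++ v) j = d (j + k)) →
      per (rv ++ v) m < d (m + k) → False := by
    intro k m hm hag hlt
    obtain ⟨m', hag', hlt'⟩ := (hbound (k + p)).2
    simp only [shift] at hag' hlt'
    have hagU : ∀ j < m - p, d (j + (k + p)) = per (v ++ rv) j := by
      intro j hj
      rw [← hswapL j, show j + (k + p) = j + p + k by ring]
      exact (hag (j + p) (by omega)).symm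
    have hltU : per (v ++ rv) (m - p) < d ((m - p) + (k + p)) := by
      rw [show (m - p) + (k + p) = m + k by omega, ← hswapL (m - p),
        show m - p + p = m by omega]
      exact hlt
    rcases lt_trichotomy m' (m - p) with h | h | h
    · rw [hagU m' h] at hlt'
      exact lt_irrefl _ hlt'
    · subst h
      omega
    · rw [hag' (m - p) h] at hltU
      exact lt_irrefl _ hltU
  intro n
  have hLlen : ((List.range p).map (fun j => d (n + j))).length = p := by simp
  have hLget : ∀ j < p, ((List.range p).map (fun j => d (n + j))).getD j 0 = d (n + j) := by
    intro j hj
    rw [List.getD_eq_getElem _ _ (by simp [hj])]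
    simp
  constructor
  · -- lower bound : reflB N w ≤ window
    obtain ⟨m, hag, hlt⟩ := (hbound n).1
    simp only [shift] at hag hlt
    have hmp : m < p := by
      by_contra hcon
      exact key2 n m (le_of_not_gt hcon) hag hlt
    have hagree : ∀ j < m, j < p - 1 →
        (reflB N w).getD j 0 = ((List.range p).map (fun j => d (n + j))).getD j 0 := by
      intro j hj hj'
      rw [hrwget j (by omega), hLget j (by omega), show n + j = j + n by ring,
        ← hag j hj, hperLo j (by omega), hrvget j (by omega), hvget j hj']
    rcases Nat.lt_or_ge m (p - 1) with hm1 | hm1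
    · apply le_of_lt
      apply lex_of_agree _ _ m (by omega) (by omega)
      · intro j hj
        exact hagree j hj (by omega)
      · rw [hrwget m (by omega), hLget m (by omega), show n + m = m + n by ring]
        calc N - 1 - w.getD m 0 = per (rv ++ v) m := by
              rw [hperLo m (by omega), hrvget m (by omega), hvget m hm1]
          _ < d (m + n) := hlt
    · have hm1' : m = p - 1 := by omega
      subst hm1'
      have hge : N - 1 - w.getD (p - 1) 0 ≤ d ((p - 1) + n) := by
        have hlt2 : N - 1 - (w.getD (p - 1) 0 + 1) < d ((p - 1) + n) := by
          rw [← hvlast, ← hrvget (p - 1) (by omega), ← hperLo (p - 1) (by omega)]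
          exact hlt
        omega
      rcases eq_or_lt_of_le hge with heq | hlt3
      · apply le_of_eq
        apply eq_of_agree _ _ (by rw [hrwlen, hLlen])
        intro j hj
        rw [hLlen] at hj
        rcases Nat.lt_or_ge j (p - 1) with hj' | hj'
        · exact hagree j (by omega) hj'
        · have hj2 : j = p - 1 := by omega
          subst hj2
          rw [hrwget (p - 1) (by omega), hLget (p - 1) (by omega),
            show n + (p - 1) = (p - 1) + n by ring]
          exact heq
      · apply le_of_lt
        apply lex_of_agree _ _ (p - 1) (by omega) (by omega)
        · intro j hj
          exact hagree j (by omega) hj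
        · rw [hrwget (p - 1) (by omega), hLget (p - 1) (by omega),
            show n + (p - 1) = (p - 1) + n by ring]
          exact hlt3
  · -- upper bound : window ≤ w
    obtain ⟨m, hag, hlt⟩ := (hbound n).2
    simp only [shift] at hag hlt
    have hmp : m < p := by
      by_contra hcon
      exact key1 n m (le_of_not_gt hcon) hag hlt
    have hagree : ∀ j < m, j < p - 1 →
        ((List.range p).map (fun j => d (n + j))).getD j 0 = w.getD j 0 := by
      intro j hj hj'
      rw [hLget j (by omega), show n + j = j + n by ring, hag j hj,
        hperU j (by omega), hvget j hj']
    rcases Nat.lt_or_ge m (p - 1) with hm1 | hm1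
    · apply le_of_lt
      apply lex_of_agree _ _ m (by omega) (by omega)
      · intro j hj
        exact hagree j hj (by omega)
      · rw [hLget m (by omega), show n + m = m + n by ring]
        calc d (m + n) < per (v ++ rv) m := hlt
          _ = w.getD m 0 := by rw [hperU m (by omega), hvget m hm1]
    · have hm1' : m = p - 1 := by omega
      subst hm1'
      have hle : d ((p - 1) + n) ≤ w.getD (p - 1) 0 := by
        have := hlt
        rw [hperU (p - 1) (by omega), hvlast] at this
        omega
      rcases eq_or_lt_of_le hle with heq | hlt3
      · apply le_of_eq
        apply eq_of_agree _ _ (by rw [hLlen])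
        intro j hj
        rcases Nat.lt_or_ge j (p - 1) with hj' | hj'
        · exact hagree j (by omega) hj'
        · have hj2 : j = p - 1 := by omega
          subst hj2
          rw [hLget (p - 1) (by omega), show n + (p - 1) = (p - 1) + n by ring]
          exact heq
      · apply le_of_lt
        apply lex_of_agree _ _ (p - 1) (by omega) (by omega)
        · intro j hj
          exact hagree j (by omega) hj
        · rw [hLget (p - 1) (by omega), show n + (p - 1) = (p - 1) + n by ring]
          exact hlt3
end

section
/- Let N ≥ 2 and let t_1 t_2 be an admissible block of length 2. Then ⌈(N-1)/2⌉ ≤ t_1 ≤ N-1 and N-1-t_1 ≤ t_2 < t_1, and the topological entropy of the subshift of finite type Z_{t_1 t_2} = {(d_i) : (N-1-t_1)(N-1-t_2) ≤ d_n d_{n+1} ≤ t_1 t_2 for all n ≥ 1} equals log(((2t_1+1−N) + √((2t_1+1−N)² + 4(2t_2+2−N)))/2). -/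
/-!
Inside the alphabet `[b₁, t₁]`, with `b₁ = N-1-t₁` and `b₂ = N-1-t₂`, the two lexicographic
constraints only say that `b₁` is followed by a digit `≥ b₂` and `t₁` by a digit `≤ t₂`; since
`b₁ → t₁` and `c → b₁` for `c ≠ b₁` are allowed, every such finite word extends to a sequence of
the shift. Count words of length `n` by whether they end in an extreme digit (`e n`) or not
(`u n`). The reflection symmetry `b₂ + t₂ = b₁ + t₁` makes the number of interior successors of
`b₁` and of `t₁` equal, to `s = t₂ - b₁`, so `e (n+1) = e n + 2 u n` and
`u (n+1) = s e n + m u n` with `m = t₁ - 1 - b₁`. The Perron root `L` of `!![1, 2; s, m]`, the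
larger root of `L² = (m+1) L + (2s - m)`, has a left eigenvector `(p, 1)` with `0 ≤ p ≤ 1`, so
`p e n + u n = L ^ n` squeezes the word count between `L ^ n` and `(2n+1) L ^ n`.
-/

open Filter Topology Finset Real

theorem pair_le_pair_iff {p q r s : ℕ} : [p, q] ≤ [r, s] ↔ p < r ∨ p = r ∧ q ≤ s := by
  rw [le_iff_lt_or_eq]
  change List.Lex (· < ·) _ _ ∨ _ ↔ _
  simp [List.cons_lex_cons_iff]
  omega

theorem admissible_pair_bounds {N t1 t2 : ℕ} (h : Admissible N [t1, t2]) :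
    N / 2 ≤ t1 ∧ t1 ≤ N - 1 ∧ N - 1 - t1 ≤ t2 ∧ t2 < t1 := by
  obtain ⟨-, hlt, hlast, hineq⟩ := h
  have ht1 : t1 < N := hlt t1 (by simp)
  have ht2 : t2 < N - 1 := hlast
  have h0 : [N - 1 - t1, N - 1 - t2] ≤ [t1, t2] := (hineq 0 (by simp)).1
  have h1 : [N - 1 - t1, N - 1 - t2] ≤ [t2, t1] := (hineq 1 (by simp)).1
  have h1' : [t2 + 1, N - 1 - t1] ≤ [t1, t2 + 1] := (hineq 1 (by simp)).2
  rw [pair_le_pair_iff] at h0 h1 h1'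
  omega

section ChainWords

variable {α : Type*} [DecidableEq α] {S : Finset α} {T : α → α → Prop} [DecidableRel T]

variable (S T) in
def chainWords : ℕ → Finset (List α)
  | 0 => {[]}
  | n + 1 => (chainWords n).biUnion fun w => {c ∈ S | ∀ x ∈ w.getLast?, T x c}.image (w ++ [·])

theorem mem_chainWords {n : ℕ} {w : List α} :
    w ∈ chainWords S T n ↔ w.length = n ∧ (∀ x ∈ w, x ∈ S) ∧ w.IsChain T := by
  induction n generalizing w with
  | zero =>
    simp only [chainWords, mem_singleton, List.length_eq_zero_iff]
    constructor
    · rintro rfl; simp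
    · exact fun h => h.1
  | succ n ih =>
    rcases w.eq_nil_or_concat' with rfl | ⟨v, c, rfl⟩
    · simp [chainWords]
    · simp [chainWords, ih, List.isChain_append, or_imp, forall_and]
      tauto

theorem card_filter_chainWords_succ (p : Option α → Prop) [DecidablePred p] (n : ℕ) :
    #{w ∈ chainWords S T (n + 1) | p w.getLast?} =
      ∑ w ∈ chainWords S T n, #{c ∈ S | (∀ x ∈ w.getLast?, T x c) ∧ p (some c)} := by
  rw [chainWords, filter_biUnion, card_biUnion]
  · refine sum_congr rfl fun w _ => ?_
    rw [filter_image, card_image_of_injective _ fun a b h => by simpa using h]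
    simp [filter_filter]
  · intro v _ w _ hvw
    simp only [Function.onFun, disjoint_left, mem_filter, mem_image]
    rintro _ ⟨⟨c, -, rfl⟩, -⟩ ⟨⟨c', -, h⟩, -⟩
    have h' := congrArg List.dropLast h
    simp only [List.dropLast_concat] at h'
    exact hvw h'.symm

theorem map_range_mem_chainWords {d : ℕ → α} (hd : ∀ k, d k ∈ S ∧ T (d k) (d (k + 1)))
    (n : ℕ) : (List.range n).map d ∈ chainWords S T n := by
  refine mem_chainWords.2 ⟨by simp, by simp [hd], ?_⟩
  rw [List.isChain_map, List.isChain_range]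
  exact fun k _ => (hd k).2

theorem exists_map_range_eq_of_mem_chainWords (hS : S.Nonempty) (hT : ∀ x ∈ S, ∃ y ∈ S, T x y)
    {n : ℕ} {w : List α} (hw : w ∈ chainWords S T n) :
    ∃ d : ℕ → α, (∀ k, d k ∈ S ∧ T (d k) (d (k + 1))) ∧ (List.range n).map d = w := by
  obtain ⟨hlen, hwS, hwT⟩ := mem_chainWords.1 hw
  choose! g hgS hgT using hT
  set y := w.getLast?.getD hS.choose
  have hy : y ∈ S := by
    rcases w.eq_nil_or_concat' with rfl | ⟨v, c, rfl⟩
    · exact hS.choose_spec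
    · simpa [y] using hwS c (by simp)
  have horbit : ∀ j, g^[j] y ∈ S := by
    intro j
    induction j with
    | zero => exact hy
    | succ j ih => rw [Function.iterate_succ_apply']; exact hgS _ ih
  -- past the end of `w`, follow the orbit of its last letter under `g`
  let d k := w.getD k (g^[k + 1 - n] y)
  have hd_tail : ∀ k, n ≤ k + 1 → d k = g^[k + 1 - n] y := by
    intro k hk
    rcases hk.lt_or_eq with hk | hk
    · simp [d, hlen, Nat.le_of_lt_succ hk]
    · rcases w.eq_nil_or_concat' with rfl | ⟨v, c, rfl⟩
      · simp at hlen; omega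
      · simp only [List.length_append, List.length_singleton] at hlen
        obtain rfl : k = v.length := by omega
        simp [d, y, ← hk, List.getElem?_append_right]
  refine ⟨d, fun k => ?_, ?_⟩
  · rcases lt_or_ge (k + 1) n with hk | hk
    · have hk' : k < w.length := by omega
      have hk1 : k + 1 < w.length := by omega
      simp only [d, List.getD_eq_getElem _ _ hk', List.getD_eq_getElem _ _ hk1]
      exact ⟨hwS _ (List.getElem_mem _), hwT.getElem k hk1⟩
    · rw [hd_tail k hk, hd_tail (k + 1) (by omega), show k + 1 + 1 - n = (k + 1 - n) + 1 by omega,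
        Function.iterate_succ_apply']
      exact ⟨horbit _, hgT _ (horbit _)⟩
  · refine List.ext_getElem (by simp [hlen]) fun k _ hk => ?_
    simp [d, List.getElem?_eq_getElem hk]

end ChainWords

theorem wordCount_eq_card_chainWords {S : Finset ℕ} {T : ℕ → ℕ → Prop} [DecidableRel T]
    (hS : S.Nonempty) (hT : ∀ x ∈ S, ∃ y ∈ S, T x y) (n : ℕ) :
    wordCount {d | ∀ k, d k ∈ S ∧ T (d k) (d (k + 1))} n = #(chainWords S T n) := by
  rw [wordCount, ← Set.ncard_coe_finset]
  congr 1
  ext u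
  simp only [Set.mem_ofPred_eq, mem_coe]
  constructor
  · rintro ⟨hlen, d, hd, hu⟩
    have hu : u = (List.range n).map d :=
      List.ext_getElem (by simp [hlen]) fun k hk _ => by
        simpa [List.getElem?_eq_getElem hk] using hu k (hlen ▸ hk)
    exact hu ▸ map_range_mem_chainWords hd n
  · intro hu
    obtain ⟨d, hd, rfl⟩ := exists_map_range_eq_of_mem_chainWords hS hT hu
    exact ⟨by simp, d, hd, fun k hk => by simp [hk]⟩

def lexShift (b1 b2 t1 t2 : ℕ) : Set (ℕ → ℕ) :=
  {d | ∀ n, [b1, b2] ≤ [d n, d (n + 1)] ∧ [d n, d (n + 1)] ≤ [t1, t2]}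

def lexEdge (b1 b2 t1 t2 x y : ℕ) : Prop := (x = b1 → b2 ≤ y) ∧ (x = t1 → y ≤ t2)

instance (b1 b2 t1 t2 : ℕ) : DecidableRel (lexEdge b1 b2 t1 t2) :=
  fun _ _ => instDecidableAnd

section LexShift

variable {b1 b2 t1 t2 : ℕ}

theorem lexShift_eq :
    lexShift b1 b2 t1 t2 = {d | ∀ k, d k ∈ Icc b1 t1 ∧ lexEdge b1 b2 t1 t2 (d k) (d (k + 1))} := by
  ext d
  simp only [lexShift, Set.mem_ofPred_eq, pair_le_pair_iff, mem_Icc, lexEdge]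
  exact forall_congr' fun k => by omega

/- The empty word is counted as interior: like an interior digit, it can be followed by any
digit of `[b1, t1]`. -/
variable (b1 b2 t1 t2) in
def extremeCount (n : ℕ) : ℕ :=
  #{w ∈ chainWords (Icc b1 t1) (lexEdge b1 b2 t1 t2) n |
    w.getLast? = some b1 ∨ w.getLast? = some t1}

variable (b1 b2 t1 t2) in
def interiorCount (n : ℕ) : ℕ :=
  #{w ∈ chainWords (Icc b1 t1) (lexEdge b1 b2 t1 t2) n |
    ¬(w.getLast? = some b1 ∨ w.getLast? = some t1)}

theorem extremeCount_zero : extremeCount b1 b2 t1 t2 0 = 0 := by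
  simp [extremeCount, chainWords]

theorem interiorCount_zero : interiorCount b1 b2 t1 t2 0 = 1 := by
  simp [interiorCount, chainWords, filter_singleton]

theorem extremeCount_add_interiorCount (n : ℕ) :
    extremeCount b1 b2 t1 t2 n + interiorCount b1 b2 t1 t2 n =
      #(chainWords (Icc b1 t1) (lexEdge b1 b2 t1 t2) n) :=
  card_filter_add_card_filter_not _

variable (hb : b1 ≤ t2) (ht : t2 < t1) (hsym : b2 + t2 = b1 + t1)
include hb ht hsym

theorem card_extreme_successors (o : Option ℕ) :
    #{c ∈ Icc b1 t1 | (∀ x ∈ o, lexEdge b1 b2 t1 t2 x c) ∧ (some c = some b1 ∨ some c = some t1)} =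
      if o = some b1 ∨ o = some t1 then 1 else 2 := by
  have hne : b1 ≠ t1 := by omega
  rcases o with _ | x
  · rw [if_neg (by simp), show {c ∈ Icc b1 t1 | _} = {b1, t1} by ext; simp [lexEdge]; omega,
      card_pair hne]
  by_cases hx1 : x = b1
  · rw [if_pos (by simp [hx1]), show {c ∈ Icc b1 t1 | _} = {t1} by ext; simp [lexEdge, hx1]; omega,
      card_singleton]
  by_cases hx2 : x = t1
  · rw [if_pos (by simp [hx2]), show {c ∈ Icc b1 t1 | _} = {b1} by ext; simp [lexEdge, hx2]; omega,
      card_singleton]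
  rw [if_neg (by simp [hx1, hx2]),
    show {c ∈ Icc b1 t1 | _} = {b1, t1} by ext; simp [lexEdge, hx1, hx2]; omega, card_pair hne]

theorem card_interior_successors (o : Option ℕ) :
    #{c ∈ Icc b1 t1 | (∀ x ∈ o, lexEdge b1 b2 t1 t2 x c) ∧ ¬(some c = some b1 ∨ some c = some t1)} =
      if o = some b1 ∨ o = some t1 then t2 - b1 else t1 - 1 - b1 := by
  rcases o with _ | x
  · rw [if_neg (by simp), show {c ∈ Icc b1 t1 | _} = Ioo b1 t1 by ext; simp [lexEdge]; omega,
      Nat.card_Ioo]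
    omega
  by_cases hx1 : x = b1
  · rw [if_pos (by simp [hx1]), show {c ∈ Icc b1 t1 | _} = Ico b2 t1 by
      ext; simp [lexEdge, hx1]; omega, Nat.card_Ico]
    omega
  by_cases hx2 : x = t1
  · rw [if_pos (by simp [hx2]), show {c ∈ Icc b1 t1 | _} = Ioc b1 t2 by
      ext; simp [lexEdge, hx2]; omega, Nat.card_Ioc]
  rw [if_neg (by simp [hx1, hx2]),
    show {c ∈ Icc b1 t1 | _} = Ioo b1 t1 by ext; simp [lexEdge, hx1, hx2]; omega, Nat.card_Ioo]
  omega

theorem extremeCount_succ (n : ℕ) :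
    extremeCount b1 b2 t1 t2 (n + 1) =
      extremeCount b1 b2 t1 t2 n + 2 * interiorCount b1 b2 t1 t2 n := by
  rw [extremeCount, card_filter_chainWords_succ (fun o => o = some b1 ∨ o = some t1),
    sum_congr rfl fun w _ => card_extreme_successors hb ht hsym w.getLast?, sum_ite,
    sum_const, sum_const, smul_eq_mul, smul_eq_mul, mul_one, mul_comm]
  rfl

theorem interiorCount_succ (n : ℕ) :
    interiorCount b1 b2 t1 t2 (n + 1) =
      (t2 - b1) * extremeCount b1 b2 t1 t2 n + (t1 - 1 - b1) * interiorCount b1 b2 t1 t2 n := by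
  rw [interiorCount, card_filter_chainWords_succ (fun o => ¬(o = some b1 ∨ o = some t1)),
    sum_congr rfl fun w _ => card_interior_successors hb ht hsym w.getLast?, sum_ite,
    sum_const, sum_const, smul_eq_mul, smul_eq_mul, mul_comm, mul_comm (t1 - 1 - b1)]
  rfl

end LexShift

section Growth

variable {m s L p : ℝ} {e u : ℕ → ℝ}

theorem pow_le_add_and_add_le_of_recurrence (hL : 1 ≤ L) (hp0 : 0 ≤ p) (hp1 : p ≤ 1)
    (hpL : p + s = L * p) (hmL : 2 * p + m = L)
    (he0 : e 0 = 0) (hu0 : u 0 = 1) (he : ∀ n, e (n + 1) = e n + 2 * u n)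
    (hu : ∀ n, u (n + 1) = s * e n + m * u n) (he_nonneg : ∀ n, 0 ≤ e n) (n : ℕ) :
    L ^ n ≤ e n + u n ∧ e n + u n ≤ (2 * n + 1) * L ^ n := by
  -- `(p, 1)` is a left eigenvector of the recurrence matrix `!![1, 2; s, m]` for `L`
  have hinv : ∀ n, p * e n + u n = L ^ n := by
    intro n
    induction n with
    | zero => simp [he0, hu0]
    | succ n ih => rw [he, hu, pow_succ, ← ih]; linear_combination e n * hpL + u n * hmL
  have hu_le : ∀ n, u n ≤ L ^ n := fun n => by nlinarith [hinv n, mul_nonneg hp0 (he_nonneg n)]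
  have he_le : ∀ n, e n ≤ 2 * n * L ^ n := by
    intro n
    induction n with
    | zero => simp [he0]
    | succ n ih =>
      have hpow : L ^ n ≤ L ^ (n + 1) := pow_le_pow_right₀ hL n.le_succ
      rw [he]
      push_cast
      nlinarith [hu_le n]
  constructor
  · nlinarith [hinv n, mul_nonneg (sub_nonneg.2 hp1) (he_nonneg n)]
  · nlinarith [hu_le n, he_le n]

theorem tendsto_log_two_mul_add_one_div :
    Tendsto (fun n : ℕ => log (2 * n + 1) / n) atTop (𝓝 0) := by
  have h := (Real.tendsto_pow_log_div_mul_add_atTop (1 / 2) (-1 / 2) 1 (by norm_num)).comp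
    (tendsto_atTop_add_const_right _ 1
      (tendsto_natCast_atTop_atTop.const_mul_atTop (zero_lt_two' ℝ)))
  convert h using 2 with n
  simp only [Function.comp_apply, pow_one]
  ring_nf

theorem tendsto_log_div_of_pow_le_of_le {F : ℕ → ℝ} (hL : 0 < L) (hlow : ∀ n, L ^ n ≤ F n)
    (hup : ∀ n, F n ≤ (2 * n + 1) * L ^ n) :
    Tendsto (fun n => log (F n) / n) atTop (𝓝 (log L)) := by
  have hup_lim : Tendsto (fun n : ℕ => log L + log (2 * n + 1) / n) atTop (𝓝 (log L)) := by
    simpa using tendsto_log_two_mul_add_one_div.const_add (log L)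
  refine tendsto_of_tendsto_of_tendsto_of_le_of_le' tendsto_const_nhds hup_lim ?_ ?_
  all_goals
    filter_upwards [eventually_gt_atTop 0] with n hn
    have hn' : (0 : ℝ) < n := Nat.cast_pos.2 hn
  · rw [le_div_iff₀ hn', mul_comm, ← log_pow]
    exact log_le_log (pow_pos hL n) (hlow n)
  · rw [add_div' _ _ _ hn'.ne', div_le_div_iff_of_pos_right hn', mul_comm, ← log_pow,
      ← log_mul (pow_pos hL n).ne' (by positivity), mul_comm]
    exact log_le_log ((pow_pos hL n).trans_le (hlow n)) (hup n)

theorem tendsto_log_div_of_recurrence (hs : 0 ≤ s) (hsm : s ≤ m + 1)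
    (he0 : e 0 = 0) (hu0 : u 0 = 1) (he : ∀ n, e (n + 1) = e n + 2 * u n)
    (hu : ∀ n, u (n + 1) = s * e n + m * u n) (he_nonneg : ∀ n, 0 ≤ e n) :
    Tendsto (fun n => log (e n + u n) / n) atTop
      (𝓝 (log ((m + 1 + √((m + 1) ^ 2 + 4 * (2 * s - m))) / 2))) := by
  set r := √((m + 1) ^ 2 + 4 * (2 * s - m))
  have hsq : r ^ 2 = (m + 1) ^ 2 + 4 * (2 * s - m) :=
    Real.sq_sqrt (by nlinarith [sq_nonneg (m - 1)])
  have hr_ge : |m - 1| ≤ r := Real.abs_le_sqrt (by nlinarith)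
  have hr_le : r ≤ m + 3 := Real.sqrt_le_iff.2 ⟨by linarith, by nlinarith⟩
  set L := (m + 1 + r) / 2 with hL_def
  have hL : 1 ≤ L := by linarith [neg_abs_le (m - 1)]
  refine tendsto_log_div_of_pow_le_of_le (by linarith) (fun n => ?_) (fun n => ?_)
  all_goals
    have := pow_le_add_and_add_le_of_recurrence (p := (L - m) / 2) hL
      (by linarith [le_abs_self (m - 1)]) (by linarith) (by linear_combination (-1/8) * hsq)
      (by ring) he0 hu0 he hu he_nonneg n
  exacts [this.1, this.2]

end Growth

theorem hasEntropy_lexShift {b1 b2 t1 t2 : ℕ} (hb : b1 ≤ t2) (ht : t2 < t1)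
    (hsym : b2 + t2 = b1 + t1) :
    hasEntropy (lexShift b1 b2 t1 t2)
      (log ((t1 - b1 + √(((t1 : ℝ) - b1) ^ 2 + 4 * (2 * t2 + 1 - b1 - t1))) / 2)) := by
  have hsucc : ∀ x ∈ Icc b1 t1, ∃ y ∈ Icc b1 t1, lexEdge b1 b2 t1 t2 x y := fun x hx =>
    ⟨if x = b1 then t1 else b1, by split_ifs <;> simp [lexEdge] at hx ⊢ <;> omega⟩
  have hm : ((t1 - 1 - b1 : ℕ) : ℝ) = t1 - b1 - 1 := by
    rw [Nat.cast_sub (by omega), Nat.cast_sub (by omega)]; push_cast; ring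
  have hs : ((t2 - b1 : ℕ) : ℝ) = t2 - b1 := Nat.cast_sub hb
  have key := tendsto_log_div_of_recurrence (m := ((t1 - 1 - b1 : ℕ) : ℝ))
    (s := ((t2 - b1 : ℕ) : ℝ)) (e := fun n => extremeCount b1 b2 t1 t2 n)
    (u := fun n => interiorCount b1 b2 t1 t2 n) (Nat.cast_nonneg _)
    (by rw [hm, hs]; linarith [(Nat.cast_lt (α := ℝ)).2 ht])
    (by simp [extremeCount_zero]) (by simp [interiorCount_zero])
    (fun n => by simp [extremeCount_succ hb ht hsym])
    (fun n => by simp [interiorCount_succ hb ht hsym]) (fun n => Nat.cast_nonneg _)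
  rw [hasEntropy, lexShift_eq]
  simp_rw [wordCount_eq_card_chainWords ⟨b1, by simp; omega⟩ hsucc,
    ← extremeCount_add_interiorCount, Nat.cast_add]
  convert key using 3
  rw [hm, hs]
  ring_nf

theorem stmt15_general (N : ℕ) (t1 t2 : ℕ) (hadm : Admissible N [t1, t2]) :
    N / 2 ≤ t1 ∧ t1 ≤ N - 1 ∧ N - 1 - t1 ≤ t2 ∧ t2 < t1 ∧
    hasEntropy
      {d : ℕ → ℕ | ∀ n, [N - 1 - t1, N - 1 - t2] ≤ [d n, d (n + 1)] ∧
        [d n, d (n + 1)] ≤ [t1, t2]}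
      (Real.log ((2 * (t1 : ℝ) + 1 - N +
        Real.sqrt ((2 * (t1 : ℝ) + 1 - N) ^ 2 + 4 * (2 * (t2 : ℝ) + 2 - N))) / 2)) := by
  obtain ⟨hN, ht1, hb, ht⟩ := admissible_pair_bounds hadm
  refine ⟨hN, ht1, hb, ht, ?_⟩
  have hcast : ((N - 1 - t1 : ℕ) : ℝ) = N - 1 - t1 := by
    rw [Nat.cast_sub (by omega), Nat.cast_sub (by omega)]; push_cast; ring
  have key := hasEntropy_lexShift (b2 := N - 1 - t2) hb ht (by omega)
  rw [hcast] at key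
  show hasEntropy (lexShift (N - 1 - t1) (N - 1 - t2) t1 t2) _
  convert key using 3
  ring_nf

/-- Theorem 7.2 (entropy part) — for an admissible block `t_1 t_2`
of length 2 one has `⌈(N-1)/2⌉ = N/2 ≤ t_1 ≤ N-1`, `N-1-t_1 ≤ t_2 < t_1`, and the
subshift `Z_{t_1 t_2}` has topological entropy
`log ((2t_1+1-N + √((2t_1+1-N)² + 4(2t_2+2-N)))/2)`. -/
theorem stmt15 (N : ℕ) (hN : 2 ≤ N) (t1 t2 : ℕ) (hadm : Admissible N [t1, t2]) :
    N / 2 ≤ t1 ∧ t1 ≤ N - 1 ∧ N - 1 - t1 ≤ t2 ∧ t2 < t1 ∧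
    hasEntropy
      {d : ℕ → ℕ | ∀ n, [N - 1 - t1, N - 1 - t2] ≤ [d n, d (n + 1)] ∧
        [d n, d (n + 1)] ≤ [t1, t2]}
      (Real.log ((2 * (t1 : ℝ) + 1 - N +
        Real.sqrt ((2 * (t1 : ℝ) + 1 - N) ^ 2 + 4 * (2 * (t2 : ℝ) + 2 - N))) / 2)) :=
  stmt15_general N t1 t2 hadm
end

section
/- Let N ≥ 2 and let t_1⋯t_p be an admissible block. Then t_1 ≥ ⌈(N-1)/2⌉, and the periodic sequence (t_1⋯t_p)^∞ is lexicographically ≥ the periodic sequence (t_1 (N-1-t_1))^∞. -/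
lemma listHeadLe {x y : ℕ} {xs ys : List ℕ} (h : x::xs ≤ y::ys) : x ≤ y := by
  rcases lt_or_eq_of_le h with h | h
  · exact List.head_le_of_lt h
  · injection h with h1 _; exact h1.le

lemma listTailLe {x : ℕ} {xs ys : List ℕ} (h : x::xs ≤ x::ys) : xs ≤ ys := by
  rcases lt_or_eq_of_le h with h | h
  · have h' : List.Lex (· < ·) (x::xs) (x::ys) := h
    cases h' with
    | cons h2 => exact le_of_lt h2
    | rel h2 => exact absurd h2 (lt_irrefl x)
  · injection h with _ h2; exact le_of_eq h2

lemma le_getD0 {l₁ l₂ : List ℕ} (h : l₁ ≤ l₂) (h1 : l₁ ≠ []) (h2 : l₂ ≠ []) :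
    l₁.getD 0 0 ≤ l₂.getD 0 0 := by
  rcases l₁ with _ | ⟨a, t⟩; · simp at h1
  rcases l₂ with _ | ⟨b, s⟩; · simp at h2
  simpa using listHeadLe h

lemma le_getD1 {l₁ l₂ : List ℕ} (h : l₁ ≤ l₂) (h1 : 2 ≤ l₁.length) (h2 : 2 ≤ l₂.length)
    (heq : l₁.getD 0 0 = l₂.getD 0 0) : l₁.getD 1 0 ≤ l₂.getD 1 0 := by
  rcases l₁ with _ | ⟨a, _ | ⟨a2, t⟩⟩
  · simp at h1
  · simp at h1
  rcases l₂ with _ | ⟨b, _ | ⟨b2, s⟩⟩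
  · simp at h2
  · simp at h2
  simp only [List.getD_cons_zero] at heq
  subst heq
  simpa using listHeadLe (listTailLe h)

lemma rot_getD (w : List ℕ) (i k : ℕ) (hi : i < w.length) (hk : k < w.length) :
    (rotB w i).getD k 0 = w.getD ((i + k) % w.length) 0 := by
  unfold rotB
  rcases lt_or_ge k (w.length - i) with h | h
  · have h1 : i + k < w.length := by omega
    rw [Nat.mod_eq_of_lt h1]
    rw [List.getD_append _ _ _ _ (by simp; omega),
        List.getD_eq_getElem _ _ (by simp; omega), List.getElem_drop,
        List.getD_eq_getElem _ _ h1]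
  · have h1 : (i + k) % w.length = k - (w.length - i) := by
      rw [Nat.mod_eq_sub_mod (by omega), Nat.mod_eq_of_lt (by omega)]
      omega
    rw [h1, List.getD_append_right _ _ _ _ (by simp; omega)]
    have h2 : k - (w.length - i) < i := by omega
    rw [List.length_drop,
        List.getD_eq_getElem _ _ (by simp [List.length_take]; omega),
        List.getElem_take, List.getD_eq_getElem _ _ (by omega)]

lemma reflB_getD (N : ℕ) (w : List ℕ) (k : ℕ) (hk : k < w.length) :
    (reflB N w).getD k 0 = N - 1 - w.getD k 0 := by
  unfold reflB
  rw [List.getD_eq_getElem _ _ (by simpa), List.getD_eq_getElem _ _ hk, List.getElem_map]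

lemma reflB_len (N : ℕ) (w : List ℕ) : (reflB N w).length = w.length := by simp [reflB]

lemma rotB_len (w : List ℕ) (i : ℕ) (hi : i ≤ w.length) : (rotB w i).length = w.length := by
  simp [rotB]; omega

lemma per_pair (x y n : ℕ) : per [x, y] n = if n % 2 = 0 then x else y := by
  have h2 : ([x, y] : List ℕ).length = 2 := rfl
  unfold per
  rw [h2]
  rcases Nat.mod_two_eq_zero_or_one n with h | h <;> simp [h]


/-- from the proof of Proposition 4.7 — for an admissible block,
`t_1 ≥ ⌈(N-1)/2⌉ = N/2` and `(t_1⋯t_p)^∞ ≥ (t_1 (N-1-t_1))^∞`. -/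
theorem stmt17 (N : ℕ) (hN : 2 ≤ N) (w : List ℕ) (hadm : Admissible N w) :
    N / 2 ≤ w.getD 0 0 ∧
    seqLe (per [w.getD 0 0, N - 1 - w.getD 0 0]) (per w) := by
  obtain ⟨hne, hltN, _, hineq⟩ := hadm
  set p := w.length with hp_def
  have hp : 0 < p := List.length_pos_iff.mpr hne
  set t1 := w.getD 0 0 with ht1_def
  have ht1N : t1 < N := by
    rw [ht1_def, List.getD_eq_getElem _ _ hp]
    exact hltN _ (List.getElem_mem _)
  have hrne : reflB N w ≠ [] := by
    have := reflB_len N w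
    intro h; rw [h] at this; simp at this; omega
  have hrotne : ∀ i, i < p → rotB w i ≠ [] := by
    intro i hi h
    have := rotB_len w i hi.le
    rw [h] at this; simp at this; omega
  -- Step A
  have hA : N - 1 - t1 ≤ t1 := by
    have h0 := le_getD0 (hineq 0 hp).1 hrne (hrotne 0 hp)
    rwa [reflB_getD N w 0 hp, rot_getD w 0 0 hp hp, Nat.zero_add, Nat.mod_eq_of_lt hp] at h0
  have hhalf : N / 2 ≤ t1 := by omega
  refine ⟨hhalf, ?_⟩
  -- key claim
  have key : ∀ n, (∀ k < n, per [t1, N - 1 - t1] k = per w k) →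
      per [t1, N - 1 - t1] n ≤ per w n := by
    intro n hpre
    rcases Nat.mod_two_eq_zero_or_one n with he | ho
    · -- even case
      rcases Nat.eq_zero_or_pos n with rfl | hn0
      · have h0 : per w 0 = t1 := by
          unfold per; rw [Nat.zero_mod]
        rw [per_pair, h0]
        simp
      · have hn2 : 2 ≤ n := by omega
        by_cases hp1 : p = 1
        · rw [per_pair, if_pos he]
          unfold per
          rw [← hp_def, hp1, Nat.mod_one]
        · have hp2 : 2 ≤ p := by omega
          set i := (n - 1) % p with hi_def
          have hi : i < p := Nat.mod_lt _ hp
          have hw1 : w.getD 1 0 = N - 1 - t1 := by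
            have h := (hpre 1 (by omega)).symm
            rw [per_pair] at h
            norm_num at h
            unfold per at h
            rwa [← hp_def, Nat.mod_eq_of_lt (by omega)] at h
          have hwi : w.getD i 0 = N - 1 - t1 := by
            have h := (hpre (n - 1) (by omega)).symm
            rw [per_pair, if_neg (by omega)] at h
            unfold per at h
            rwa [← hp_def, ← hi_def] at h
          have hle := (hineq i hi).1
          have h0 : (reflB N w).getD 0 0 = (rotB w i).getD 0 0 := by
            rw [reflB_getD N w 0 hp, rot_getD w i 0 hi hp, Nat.add_zero, Nat.mod_eq_of_lt hi,
              hwi, ← ht1_def]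
          have h1 := le_getD1 hle (by rw [reflB_len]; omega)
            (by rw [rotB_len w i hi.le]; omega) h0
          rw [reflB_getD N w 1 (by omega), rot_getD w i 1 hi (by omega), hw1] at h1
          have hmod : (i + 1) % p = n % p := by
            conv_rhs => rw [show n = (n - 1) + 1 by omega, Nat.add_mod]
            rw [hi_def, Nat.mod_eq_of_lt (show 1 < p by omega)]
          rw [hmod] at h1
          rw [per_pair, if_pos he]
          unfold per
          rw [← hp_def]
          calc t1 = N - 1 - (N - 1 - t1) := by omega
            _ ≤ w.getD (n % p) 0 := h1
    · -- odd case
      rw [per_pair, if_neg (by omega)]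
      set i := n % p with hi_def
      have hi : i < p := Nat.mod_lt _ hp
      have h0 := le_getD0 (hineq i hi).1 hrne (hrotne i hi)
      rw [reflB_getD N w 0 hp, rot_getD w i 0 hi hp, Nat.add_zero, Nat.mod_eq_of_lt hi] at h0
      rw [← ht1_def] at h0
      exact h0
  -- conclude
  by_cases heq : per [t1, N - 1 - t1] = per w
  · exact Or.inr heq
  · left
    obtain ⟨m, hm⟩ := Function.ne_iff.mp heq
    have hex : ∃ n, per [t1, N - 1 - t1] n ≠ per w n := ⟨m, hm⟩
    classical
    refine ⟨Nat.find hex, fun k hk => ?_, ?_⟩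
    · by_contra hne'
      exact Nat.find_min hex hk hne'
    · have hpre : ∀ k < Nat.find hex, per [t1, N - 1 - t1] k = per w k := by
        intro k hk
        by_contra hne'
        exact Nat.find_min hex hk hne'
      exact lt_of_le_of_ne (key _ hpre) (Nat.find_spec hex)
end
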